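/- Let A and B be groups and W ⊆ F_∞ a set of words. Then in the verbal product A ∗_W B one has W(A ∗_W B) ∩ [A,B]^w = {1}. -/

import Mathlib

open Monoid
open scoped commutatorElement

/-- The verbal subgroup `W(G)`: the subgroup of `G` generated by all evaluations of the
words of `W` at tuples of elements of `G`. -/
def verbalSubgroup (W : Set (FreeGroup ℕ)) (G : Type*) [Group G] : Subgroup G :=
  Subgroup.closure {x | ∃ w ∈ W, ∃ f : ℕ → G, FreeGroup.lift f w = x}

theorem lift_comp_eval {G H : Type*} [Group G] [Group H] (φ : G →* H) (f : ℕ → G)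
    (w : FreeGroup ℕ) : φ (FreeGroup.lift f w) = FreeGroup.lift (φ ∘ f) w := by
  have h : φ.comp (FreeGroup.lift f) = FreeGroup.lift (φ ∘ f) :=
    FreeGroup.ext_hom _ _ (fun a => by simp)
  exact DFunLike.congr_fun h w

theorem verbalSubgroup_map_le {G H : Type*} [Group G] [Group H] (W : Set (FreeGroup ℕ))
    (φ : G →* H) : (verbalSubgroup W G).map φ ≤ verbalSubgroup W H := by
  rw [verbalSubgroup, MonoidHom.map_closure, Subgroup.closure_le]
  rintro x ⟨y, ⟨w, hw, f, rfl⟩, rfl⟩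
  exact Subgroup.subset_closure ⟨w, hw, φ ∘ f, (lift_comp_eval φ f w).symm⟩

/-- Verbal subgroups are normal. -/
instance verbalSubgroup_normal (W : Set (FreeGroup ℕ)) (G : Type*) [Group G] :
    (verbalSubgroup W G).Normal := by
  constructor
  intro n hn g
  have h := verbalSubgroup_map_le (G := G) (H := G) W (MulAut.conj g).toMonoidHom
  have h2 : (MulAut.conj g).toMonoidHom n ∈ verbalSubgroup W G := h ⟨n, hn, rfl⟩
  simpa using h2

/-- The subgroup `[A,B]` of the free product `A ∗ B` generated by the commutators
`[a,b] = a * b * a⁻¹ * b⁻¹` with `a ∈ A`, `b ∈ B`. -/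
def commSubgroup (A B : Type*) [Group A] [Group B] : Subgroup (Coprod A B) :=
  Subgroup.closure {x | ∃ (a : A) (b : B), x = ⁅(Coprod.inl a : Coprod A B), Coprod.inr b⁆}

/-- The kernel of the verbal product: (the normal closure of) `W(A ∗ B) ∩ [A,B]`.
Since `W(A ∗ B) ∩ [A,B]` is in fact a normal subgroup of `A ∗ B`, taking the normal
closure does not change the subgroup. -/
def verbalProductKer (W : Set (FreeGroup ℕ)) (A B : Type*) [Group A] [Group B] :
    Subgroup (Coprod A B) :=
  Subgroup.normalClosure ((verbalSubgroup W (Coprod A B) ⊓ commSubgroup A B : Subgroup _) : Set _)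

instance verbalProductKer_normal (W : Set (FreeGroup ℕ)) (A B : Type*) [Group A] [Group B] :
    (verbalProductKer W A B).Normal := Subgroup.normalClosure_normal

/-- The verbal product `A ∗_W B := (A ∗ B)/(W(A ∗ B) ∩ [A,B])`. -/
abbrev VerbalProduct (W : Set (FreeGroup ℕ)) (A B : Type*) [Group A] [Group B] : Type _ :=
  Coprod A B ⧸ verbalProductKer W A B

/-- The quotient homomorphism `q : A ∗ B → A ∗_W B`. -/
def vq (W : Set (FreeGroup ℕ)) (A B : Type*) [Group A] [Group B] :
    Coprod A B →* VerbalProduct W A B :=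
  QuotientGroup.mk' (verbalProductKer W A B)

/-- The copy of `A` inside the verbal product `A ∗_W B`. -/
def vinl (W : Set (FreeGroup ℕ)) (A B : Type*) [Group A] [Group B] :
    A →* VerbalProduct W A B := (vq W A B).comp Coprod.inl

/-- The copy of `B` inside the verbal product `A ∗_W B`. -/
def vinr (W : Set (FreeGroup ℕ)) (A B : Type*) [Group A] [Group B] :
    B →* VerbalProduct W A B := (vq W A B).comp Coprod.inr

/-- `[A,B]^w`, the image of `[A,B]` in the verbal product `A ∗_W B`. -/
def commW (W : Set (FreeGroup ℕ)) (A B : Type*) [Group A] [Group B] :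
    Subgroup (VerbalProduct W A B) := (commSubgroup A B).map (vq W A B)

/-!
If `q : G → G/N` with `N = V ∩ C`, an element `q v = q c` (`v ∈ V`, `c ∈ C`) satisfies
`v⁻¹ c ∈ N ⊆ C`, hence `v ∈ V ∩ C = N` and `q v = 1`. This applies to `V = W(A ∗ B)` and
`C = [A,B]` because verbal subgroups are carried onto verbal subgroups by surjections, and
because `[A,B]` is normal in `A ∗ B`, so that the normal closure defining the kernel of the
verbal product stays inside `[A,B]`.
-/

theorem map_mk'_inf_map_mk'_eq_bot {G : Type*} [Group G] {V C N : Subgroup G} [N.Normal]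
    (hVC : V ⊓ C ≤ N) (hNC : N ≤ C) :
    V.map (QuotientGroup.mk' N) ⊓ C.map (QuotientGroup.mk' N) = ⊥ := by
  rw [eq_bot_iff]
  rintro _ ⟨⟨v, hv, hvc⟩, c, hc, rfl⟩
  have hvC : v ∈ C := by
    have hvc' : v⁻¹ * c ∈ C := hNC (QuotientGroup.eq.mp hvc)
    rwa [Subgroup.mul_mem_cancel_right _ hc, inv_mem_iff] at hvc'
  rw [Subgroup.mem_bot, ← hvc, QuotientGroup.mk'_apply, QuotientGroup.eq_one_iff]
  exact hVC ⟨hv, hvC⟩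

theorem verbalSubgroup_map_of_surjective {G H : Type*} [Group G] [Group H]
    (W : Set (FreeGroup ℕ)) {φ : G →* H} (hφ : Function.Surjective φ) :
    (verbalSubgroup W G).map φ = verbalSubgroup W H := by
  refine le_antisymm (verbalSubgroup_map_le W φ) ?_
  rw [verbalSubgroup, Subgroup.closure_le]
  rintro _ ⟨w, hw, f, rfl⟩
  obtain ⟨g, rfl⟩ := hφ.comp_left f
  exact ⟨_, Subgroup.subset_closure ⟨w, hw, g, rfl⟩, lift_comp_eval φ g w⟩

section CommSubgroup

open Coprod

variable {A B : Type*} [Group A] [Group B]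

theorem conj_inl_commutatorElement (a a₀ : A) (b : B) :
    inl a * ⁅(inl a₀ : Coprod A B), inr b⁆ * (inl a)⁻¹ =
      ⁅(inl (a * a₀) : Coprod A B), inr b⁆ * ⁅(inl a : Coprod A B), inr b⁆⁻¹ := by
  simp only [commutatorElement_def, map_mul]
  group

theorem conj_inr_commutatorElement (b b₀ : B) (a : A) :
    (inr b : Coprod A B) * ⁅(inl a : Coprod A B), inr b₀⁆ * (inr b)⁻¹ =
      ⁅(inl a : Coprod A B), inr b⁆⁻¹ * ⁅(inl a : Coprod A B), inr (b * b₀)⁆ := by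
  simp only [commutatorElement_def, map_mul]
  group

theorem commSubgroup_le_comap_conj (g : Coprod A B) :
    commSubgroup A B ≤ (commSubgroup A B).comap (MulAut.conj g).toMonoidHom := by
  have commutator_mem {a : A} {b : B} : ⁅(inl a : Coprod A B), inr b⁆ ∈
      commSubgroup A B := Subgroup.subset_closure ⟨a, b, rfl⟩
  induction g using induction_on with
  | inl a =>
    refine (Subgroup.closure_le _).2 ?_
    rintro _ ⟨a₀, b, rfl⟩
    show inl a * ⁅(inl a₀ : Coprod A B), inr b⁆ * (inl a)⁻¹ ∈ commSubgroup A B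
    rw [conj_inl_commutatorElement]
    exact mul_mem commutator_mem (inv_mem commutator_mem)
  | inr b =>
    refine (Subgroup.closure_le _).2 ?_
    rintro _ ⟨a, b₀, rfl⟩
    show inr b * ⁅(inl a : Coprod A B), inr b₀⁆ * (inr b)⁻¹ ∈ commSubgroup A B
    rw [conj_inr_commutatorElement]
    exact mul_mem (inv_mem commutator_mem) commutator_mem
  | mul g h hg hh =>
    intro x hx
    simpa [mul_assoc] using hg (hh hx)

instance commSubgroup_normal : (commSubgroup A B).Normal :=
  ⟨fun _ hx g => by simpa using commSubgroup_le_comap_conj g hx⟩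

theorem verbalProductKer_le_commSubgroup (W : Set (FreeGroup ℕ)) :
    verbalProductKer W A B ≤ commSubgroup A B :=
  Subgroup.normalClosure_le_normal fun _ hx => hx.2

end CommSubgroup

/-- In the verbal product `A ∗_W B` one has `W(A ∗_W B) ∩ [A,B]^w = {1}`. -/
theorem verbalSubgroup_inf_commW_eq_bot {A B : Type*} [Group A] [Group B]
    (W : Set (FreeGroup ℕ)) :
    verbalSubgroup W (VerbalProduct W A B) ⊓ commW W A B = ⊥ := by
  rw [← verbalSubgroup_map_of_surjective W (QuotientGroup.mk'_surjective _)]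
  exact map_mk'_inf_map_mk'_eq_bot Subgroup.le_normalClosure
    (verbalProductKer_le_commSubgroup W)
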